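/- With α_t = (H+1)/(H+t) and α_t^i = α_i ∏_{j=i+1}^t (1 - α_j) (where α_t^i = α_i if t < i), for every integer i ≥ 1, Σ_{t=i}^∞ α_t^i = 1 + 1/H. -/

import Mathlib

open Real Finset

/-- Learning rate `α_t = (H+1)/(H+t)`. -/
noncomputable def lr (H t : ℕ) : ℝ := (H + 1) / (H + t)

/-- Weight `α_t^i = α_i ∏_{j=i+1}^t (1 - α_j)` (equal to `α_i` when `t < i + 1`). -/
noncomputable def lrWeight (H i t : ℕ) : ℝ :=
  lr H i * ∏ j ∈ Finset.Icc (i + 1) t, (1 - lr H j)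

open Filter Topology

/-!
Since `1 - α_{t+1} = t / (H + t + 1)`, the weights satisfy `(H + t + 1) α_{t+1}^i = t α_t^i`,
so `H α_t^i = (H + t) α_t^i - (H + t + 1) α_{t+1}^i` and the series telescopes to
`(H + i) α_i^i / H = (H + 1) / H`, provided `(H + t) α_t^i → 0`. For `H ≥ 1` the same recursion
makes `t (H + t) α_t^i` nonincreasing, so `(H + t) α_t^i = O(1 / t)`.
-/

theorem Antitone.hasSum_sub_succ {g : ℕ → ℝ} {l : ℝ} (hg : Antitone g)
    (hl : Tendsto g atTop (𝓝 l)) : HasSum (fun n ↦ g n - g (n + 1)) (g 0 - l) := by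
  rw [hasSum_iff_tendsto_nat_of_nonneg (fun n ↦ sub_nonneg.2 (hg n.le_succ))]
  simpa only [sum_range_sub'] using tendsto_const_nhds.sub hl

lemma lr_nonneg (H t : ℕ) : 0 ≤ lr H t := by
  unfold lr; positivity

lemma add_mul_lr (H t : ℕ) (h : H + t ≠ 0) : ((H : ℝ) + t) * lr H t = H + 1 := by
  rw [lr, mul_div_cancel₀]
  exact_mod_cast h

lemma add_mul_one_sub_lr_succ (H t : ℕ) : ((H : ℝ) + (t + 1)) * (1 - lr H (t + 1)) = t := by
  have h := add_mul_lr H (t + 1) (by omega)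
  push_cast at h
  rw [mul_one_sub, h]
  ring

lemma lrWeight_self (H i : ℕ) : lrWeight H i i = lr H i := by
  simp [lrWeight]

lemma lrWeight_nonneg (H i t : ℕ) : 0 ≤ lrWeight H i t := by
  refine mul_nonneg (lr_nonneg H i) (prod_nonneg fun j hj ↦ ?_)
  obtain ⟨k, rfl⟩ : ∃ k, j = k + 1 := ⟨j - 1, by grind⟩
  have h := add_mul_one_sub_lr_succ H k
  exact nonneg_of_mul_nonneg_right (h ▸ k.cast_nonneg) (by positivity)

lemma add_mul_lrWeight_succ (H : ℕ) {i t : ℕ} (hit : i ≤ t) :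
    ((H : ℝ) + (t + 1)) * lrWeight H i (t + 1) = t * lrWeight H i t := by
  rw [lrWeight, lrWeight, prod_Icc_succ_top (by omega)]
  linear_combination (lr H i * ∏ j ∈ Icc (i + 1) t, (1 - lr H j)) *
    add_mul_one_sub_lr_succ H t

lemma mul_add_mul_lrWeight_le (H : ℕ) (hH : 1 ≤ H) {i t : ℕ} (hit : i ≤ t) :
    t * ((H + t) * lrWeight H i t) ≤ i * ((H + i) * lrWeight H i i) := by
  induction t, hit using Nat.le_induction with
  | base => rfl
  | succ t hit ih =>
    have hH' : (1 : ℝ) ≤ H := by exact_mod_cast hH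
    calc ((t + 1 : ℕ) : ℝ) * ((H + (t + 1 : ℕ)) * lrWeight H i (t + 1))
        = (t + 1) * t * lrWeight H i t := by
          push_cast
          rw [add_mul_lrWeight_succ H hit]
          ring
      _ ≤ t * ((H + t) * lrWeight H i t) := by
          have hw := lrWeight_nonneg H i t
          have ht := t.cast_nonneg (α := ℝ)
          nlinarith [mul_nonneg (mul_nonneg ht hw) (sub_nonneg.2 hH')]
      _ ≤ _ := ih

lemma tendsto_add_mul_lrWeight (H : ℕ) (hH : 1 ≤ H) (i : ℕ) :
    Tendsto (fun t : ℕ ↦ ((H : ℝ) + t) * lrWeight H i t) atTop (𝓝 0) := by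
  refine squeeze_zero' (.of_forall fun t ↦ by have := lrWeight_nonneg H i t; positivity) ?_
    (tendsto_const_div_atTop_nhds_zero_nat (i * ((H + i) * lrWeight H i i)))
  filter_upwards [eventually_ge_atTop i, eventually_gt_atTop 0] with t hit ht
  rw [le_div_iff₀ (by exact_mod_cast ht), mul_comm]
  exact mul_add_mul_lrWeight_le H hH hit

/-- By `lrWeight_tsum`, this is the tail sum `∑_{s ≥ max i t} α_s^i`. -/
noncomputable def lrWeightTail (H i t : ℕ) : ℝ :=
  (H + max i t) * lrWeight H i (max i t) / H

lemma ite_lrWeight_eq_sub {H : ℕ} (hH : H ≠ 0) (i t : ℕ) :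
    (if i ≤ t then lrWeight H i t else 0) = lrWeightTail H i t - lrWeightTail H i (t + 1) := by
  by_cases hit : i ≤ t
  · simp only [lrWeightTail, if_pos hit, max_eq_right hit, max_eq_right (hit.trans t.le_succ)]
    push_cast
    rw [← sub_div, add_mul_lrWeight_succ H hit]
    field_simp
    ring
  · have hti : t + 1 ≤ i := Nat.lt_of_not_le hit
    simp only [lrWeightTail, if_neg hit, max_eq_left (t.le_succ.trans hti), max_eq_left hti,
      sub_self]

lemma antitone_lrWeightTail {H : ℕ} (hH : H ≠ 0) (i : ℕ) : Antitone (lrWeightTail H i) :=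
  antitone_nat_of_succ_le fun t ↦ sub_nonneg.1 <| by
    rw [← ite_lrWeight_eq_sub hH]
    split_ifs
    exacts [lrWeight_nonneg H i t, le_rfl]

lemma tendsto_lrWeightTail (H : ℕ) (hH : 1 ≤ H) (i : ℕ) :
    Tendsto (lrWeightTail H i) atTop (𝓝 0) := by
  rw [← zero_div (H : ℝ)]
  exact ((tendsto_add_mul_lrWeight H hH i).comp
    (tendsto_atTop_mono (le_max_right i) tendsto_id)).div_const (H : ℝ)

lemma lrWeightTail_zero {H : ℕ} (hH : H ≠ 0) (i : ℕ) : lrWeightTail H i 0 = 1 + 1 / H := by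
  have hH' : (H : ℝ) ≠ 0 := by exact_mod_cast hH
  simp only [lrWeightTail, max_eq_left i.zero_le, lrWeight_self, add_mul_lr H i (by omega)]
  field_simp

theorem lrWeight_tsum_general (H : ℕ) (hH : 1 ≤ H) (i : ℕ) :
    ∑' t : ℕ, (if i ≤ t then lrWeight H i t else 0) = 1 + 1 / (H : ℝ) := by
  have hH0 : H ≠ 0 := by omega
  simpa only [ite_lrWeight_eq_sub hH0, lrWeightTail_zero hH0, sub_zero] using
    ((antitone_lrWeightTail hH0 i).hasSum_sub_succ (tendsto_lrWeightTail H hH i)).tsum_eq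

theorem lrWeight_tsum (H : ℕ) (hH : 1 ≤ H) (i : ℕ) (hi : 1 ≤ i) :
    ∑' t : ℕ, (if i ≤ t then lrWeight H i t else 0) = 1 + 1 / (H : ℝ) :=
  lrWeight_tsum_general H hH i
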